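/- Let F, G be continuously differentiable with FG = I_r, let ρ solve ρ′ = F′Gρ, ρ(0) = I_r, let u₁ solve u₁′ = λGFu₁, u₁(0) = I_p. Define g(x,λ) = ρ(x)⁻¹ F(x) u₁(x,λ) G(0). Then g(0,λ) = I_r and g satisfies the integro-differential equation (d/dx) g(x,λ) − α(x) ∫₀ˣ β(t) g(t,λ) dt − λ g(x,λ) = 0, where α(x) = ρ(x)⁻¹ F′(x) ũ₁(x) and β(t) = −ũ₁(t)⁻¹ (G(t)F′(t)G(t) + G′(t)) ρ(t), with ũ₁′ = −GF′ũ₁, ũ₁(0) = I_p. -/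

import Mathlib

/-!
Differentiating `ρ⁻¹` gives `(ρ⁻¹)' = -ρ⁻¹ F' G`, and `F G = 1` gives `F G F = F`, so
`g' = ρ⁻¹ F' (1 - G F) u₁ G(0) + λ g`. The integral term has a closed form:
`k = ũ₁⁻¹ (1 - G F) u₁ G(0)` vanishes at `0` and has derivative `β g`, so `∫₀ˣ β g = k x`,
and `α k = ρ⁻¹ F' (1 - G F) u₁ G(0)`.
-/

open Set Matrix intervalIntegral

attribute [local instance] Matrix.normedAddCommGroup Matrix.normedSpace

section MatrixCalculus

variable {𝕜 : Type*} [RCLike 𝕜] {l m n : Type*} {s : Set ℝ} {x : ℝ}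

theorem Matrix.mul_mul_cancel_left_of_mul_eq_one [Fintype l] [Fintype m] [DecidableEq l]
    {A : Matrix l m 𝕜} {B : Matrix m l 𝕜} (h : A * B = 1) (X : Matrix l n 𝕜) :
    A * (B * X) = X := by
  rw [← Matrix.mul_assoc, h, Matrix.one_mul]

theorem HasDerivWithinAt.matrix_mul [Fintype l] [Fintype m] [Fintype n]
    {A : ℝ → Matrix l m 𝕜} {B : ℝ → Matrix m n 𝕜} {A' : Matrix l m 𝕜} {B' : Matrix m n 𝕜}
    (hA : HasDerivWithinAt A A' s x) (hB : HasDerivWithinAt B B' s x) :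
    HasDerivWithinAt (fun t => A t * B t) (A' * B x + A x * B') s x := by
  refine hasDerivWithinAt_pi.2 fun i => hasDerivWithinAt_pi.2 fun j => ?_
  have hAB : ∀ k ∈ Finset.univ, HasDerivWithinAt (fun t => A t i k * B t k j)
      (A' i k * B x k j + A x i k * B' k j) s x := fun k _ =>
    (hasDerivWithinAt_pi.1 (hasDerivWithinAt_pi.1 hA i) k).mul
      (hasDerivWithinAt_pi.1 (hasDerivWithinAt_pi.1 hB k) j)
  simpa only [Matrix.mul_apply, Matrix.add_apply, Finset.sum_add_distrib] using
    HasDerivWithinAt.fun_sum hAB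

@[fun_prop]
theorem ContinuousOn.matrix_mul [Fintype m] {A : ℝ → Matrix l m 𝕜} {B : ℝ → Matrix m n 𝕜}
    (hA : ContinuousOn A s) (hB : ContinuousOn B s) : ContinuousOn (fun t => A t * B t) s :=
  continuousOn_iff_continuous_domRestrict.2 (hA.domRestrict.matrix_mul hB.domRestrict)

theorem HasDerivWithinAt.matrix_inv [Fintype m] [DecidableEq m]
    {A : ℝ → Matrix m m 𝕜} {A' : Matrix m m 𝕜}
    (hA : HasDerivWithinAt A A' s x) (hx : IsUnit (A x)) :
    HasDerivWithinAt (fun t => (A t)⁻¹) (-((A x)⁻¹ * A' * (A x)⁻¹)) s x := by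
  -- Derivatives only see the topology, so we may switch to the operator norm, for which
  -- matrices form a complete normed algebra and `Ring.inverse` is differentiable.
  let R : NormedRing (Matrix m m 𝕜) := Matrix.linftyOpNormedRing
  let _ : NormedAlgebra ℝ (Matrix m m 𝕜) := Matrix.linftyOpNormedAlgebra
  have : @CompleteSpace (Matrix m m 𝕜) R.toUniformSpace := FiniteDimensional.complete ℝ _
  obtain ⟨u, hu⟩ := hx
  have hinv := hasFDerivAt_ringInverse (𝕜 := ℝ) u
  rw [hu] at hinv
  have h := hinv.comp_hasDerivWithinAt x hA
  simp only [_root_.neg_apply, ContinuousLinearMap.mulLeftRight_apply, ← Ring.inverse_unit, hu,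
    Function.comp_def] at h
  simp only [nonsing_inv_eq_ringInverse]
  exact h

end MatrixCalculus

theorem integral_eq_sub_of_hasDerivWithinAt_Icc {E : Type*} [NormedAddCommGroup E]
    [NormedSpace ℝ E] [CompleteSpace E] {f f' : ℝ → E} {a b x : ℝ} (hx : x ∈ Icc a b)
    (hf : ∀ t ∈ Icc a b, HasDerivWithinAt f (f' t) (Icc a b) t)
    (hf' : ContinuousOn f' (Icc a b)) :
    ∫ t in a..x, f' t = f x - f a := by
  have hsub : Icc a x ⊆ Icc a b := Icc_subset_Icc le_rfl hx.2
  refine integral_eq_sub_of_hasDerivAt_of_le hx.1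
    (fun t ht => (hf t (hsub ht)).continuousWithinAt.mono hsub) (fun t ht => ?_)
    ((hf'.mono hsub).intervalIntegrable_of_Icc hx.1)
  exact (hf t (hsub (Ioo_subset_Icc_self ht))).hasDerivAt
    (Icc_mem_nhds ht.1 (ht.2.trans_le hx.2))

section FactorizedODE

variable {𝕜 : Type*} [RCLike 𝕜] {m n : Type*} [Fintype m] [DecidableEq m] [Fintype n]
  [DecidableEq n] {s : Set ℝ} {x : ℝ} {lam : 𝕜} {F : ℝ → Matrix m n 𝕜} {G : ℝ → Matrix n m 𝕜}
  {F' : Matrix m n 𝕜} {G' : Matrix n m 𝕜} {u : ℝ → Matrix n n 𝕜} (C : Matrix n m 𝕜)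

theorem hasDerivWithinAt_inv_mul_solution {ρ : ℝ → Matrix m m 𝕜}
    (hF : HasDerivWithinAt F F' s x) (hFG : F x * G x = 1)
    (hρ : HasDerivWithinAt ρ (F' * G x * ρ x) s x) (hρx : IsUnit (ρ x))
    (hu : HasDerivWithinAt u (lam • (G x * F x * u x)) s x) :
    HasDerivWithinAt (fun t => (ρ t)⁻¹ * (F t * u t * C))
      ((ρ x)⁻¹ * (F' * ((1 - G x * F x) * u x * C)) + lam • ((ρ x)⁻¹ * (F x * u x * C))) s x := by
  have hdet : IsUnit (ρ x).det := (isUnit_iff_isUnit_det _).1 hρx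
  convert (hρ.matrix_inv hρx).matrix_mul
    ((hF.matrix_mul hu).matrix_mul (hasDerivWithinAt_const x s C)) using 1
  simp only [Matrix.sub_mul, Matrix.mul_sub, Matrix.add_mul, Matrix.mul_add, Matrix.mul_assoc,
    Matrix.one_mul, Matrix.mul_zero, Matrix.neg_mul, Matrix.mul_smul, Matrix.smul_mul,
    mul_nonsing_inv_cancel_left _ _ hdet, Matrix.mul_mul_cancel_left_of_mul_eq_one hFG, add_zero]
  abel

theorem hasDerivWithinAt_inv_mul_complement_solution {τ : ℝ → Matrix n n 𝕜}
    (hF : HasDerivWithinAt F F' s x) (hG : HasDerivWithinAt G G' s x) (hFG : F x * G x = 1)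
    (hτ : HasDerivWithinAt τ (-(G x * F' * τ x)) s x) (hτx : IsUnit (τ x))
    (hu : HasDerivWithinAt u (lam • (G x * F x * u x)) s x) :
    HasDerivWithinAt (fun t => (τ t)⁻¹ * ((1 - G t * F t) * u t * C))
      (-((τ x)⁻¹ * ((G x * F' * G x + G') * (F x * u x * C)))) s x := by
  have hdet : IsUnit (τ x).det := (isUnit_iff_isUnit_det _).1 hτx
  have hP : HasDerivWithinAt (fun t => 1 - G t * F t) (0 - (G' * F x + G x * F')) s x :=
    (hasDerivWithinAt_const x s 1).sub (hG.matrix_mul hF)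
  convert (hτ.matrix_inv hτx).matrix_mul
    ((hP.matrix_mul hu).matrix_mul (hasDerivWithinAt_const x s C)) using 1
  simp only [Matrix.sub_mul, Matrix.mul_sub, Matrix.add_mul, Matrix.mul_add, Matrix.mul_assoc,
    Matrix.one_mul, Matrix.mul_zero, Matrix.neg_mul, Matrix.mul_neg, neg_neg, Matrix.mul_smul,
    mul_nonsing_inv_cancel_left _ _ hdet,
    Matrix.mul_mul_cancel_left_of_mul_eq_one hFG, add_zero, zero_sub, sub_self, smul_zero]
  abel

end FactorizedODE

theorem stmt_15_general {r p : ℕ} {T : ℝ} (hT : 0 < T) (lam : ℂ)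
    (F F' : ℝ → Matrix (Fin r) (Fin p) ℂ) (G G' : ℝ → Matrix (Fin p) (Fin r) ℂ)
    (hFder : ∀ x ∈ Icc (0:ℝ) T, HasDerivWithinAt F (F' x) (Icc 0 T) x)
    (hGder : ∀ x ∈ Icc (0:ℝ) T, HasDerivWithinAt G (G' x) (Icc 0 T) x)
    (hFcont : ContinuousOn F' (Icc 0 T)) (hGcont : ContinuousOn G' (Icc 0 T))
    (hFG : ∀ x ∈ Icc (0:ℝ) T, F x * G x = 1)
    (ρ : ℝ → Matrix (Fin r) (Fin r) ℂ)
    (hρ : ∀ x ∈ Icc (0:ℝ) T,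
      HasDerivWithinAt ρ (F' x * G x * ρ x) (Icc 0 T) x)
    (hρ0 : ρ 0 = 1) (hρinv : ∀ x ∈ Icc (0:ℝ) T, IsUnit (ρ x))
    (u₁ tu : ℝ → Matrix (Fin p) (Fin p) ℂ)
    (hu₁ : ∀ x ∈ Icc (0:ℝ) T,
      HasDerivWithinAt u₁ (lam • (G x * F x * u₁ x)) (Icc 0 T) x)
    (hu₁0 : u₁ 0 = 1)
    (htu : ∀ x ∈ Icc (0:ℝ) T,
      HasDerivWithinAt tu (-(G x * F' x * tu x)) (Icc 0 T) x)
    (htu0 : tu 0 = 1) (htuinv : ∀ x ∈ Icc (0:ℝ) T, IsUnit (tu x))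
    (g : ℝ → Matrix (Fin r) (Fin r) ℂ)
    (hg : ∀ x : ℝ, g x = (ρ x)⁻¹ * (F x * u₁ x * G 0))
    (α : ℝ → Matrix (Fin r) (Fin p) ℂ)
    (hα : ∀ x : ℝ, α x = (ρ x)⁻¹ * (F' x * tu x))
    (β : ℝ → Matrix (Fin p) (Fin r) ℂ)
    (hβ : ∀ t : ℝ, β t = -((tu t)⁻¹ * ((G t * F' t * G t + G' t) * ρ t))) :
    g 0 = 1 ∧ ∀ x ∈ Icc (0:ℝ) T,
      HasDerivWithinAt g
        (α x * (∫ t in (0:ℝ)..x, β t * g t) + lam • g x) (Icc 0 T) x := by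
  have h0 : (0:ℝ) ∈ Icc 0 T := ⟨le_rfl, hT.le⟩
  set k : ℝ → Matrix (Fin p) (Fin r) ℂ := fun t => (tu t)⁻¹ * ((1 - G t * F t) * u₁ t * G 0)
  have hk : ∀ t ∈ Icc 0 T, HasDerivWithinAt k (β t * g t) (Icc 0 T) t := fun t ht => by
    convert hasDerivWithinAt_inv_mul_complement_solution (G 0) (hFder t ht) (hGder t ht)
      (hFG t ht) (htu t ht) (htuinv t ht) (hu₁ t ht) using 1
    have hdet : IsUnit (ρ t).det := (isUnit_iff_isUnit_det _).1 (hρinv t ht)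
    simp only [hβ, hg, Matrix.neg_mul, Matrix.mul_assoc, mul_nonsing_inv_cancel_left _ _ hdet]
  have hβg : ContinuousOn (fun t => β t * g t) (Icc 0 T) := by
    have hF := HasDerivWithinAt.continuousOn hFder
    have hG := HasDerivWithinAt.continuousOn hGder
    have hρc := HasDerivWithinAt.continuousOn hρ
    have hu := HasDerivWithinAt.continuousOn hu₁
    have hρi := HasDerivWithinAt.continuousOn fun t ht => (hρ t ht).matrix_inv (hρinv t ht)
    have hτi := HasDerivWithinAt.continuousOn fun t ht => (htu t ht).matrix_inv (htuinv t ht)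
    simp only [hβ, hg]
    fun_prop
  have hk0 : k 0 = 0 := by simp [k, htu0, hu₁0, Matrix.sub_mul, Matrix.mul_assoc, hFG 0 h0]
  refine ⟨by simp [hg, hρ0, hu₁0, hFG 0 h0], fun x hx => ?_⟩
  rw [integral_eq_sub_of_hasDerivWithinAt_Icc hx hk hβg, hk0, sub_zero]
  have hdet : IsUnit (tu x).det := (isUnit_iff_isUnit_det _).1 (htuinv x hx)
  convert hasDerivWithinAt_inv_mul_solution (G 0) (hFder x hx) (hFG x hx) (hρ x hx) (hρinv x hx)
    (hu₁ x hx) using 1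
  · exact funext hg
  · simp only [hα, hg, k, Matrix.mul_assoc, mul_nonsing_inv_cancel_left _ _ hdet]

theorem stmt_15 {r p : ℕ} (hr : 0 < r) (hp : 0 < p) {T : ℝ} (hT : 0 < T) (lam : ℂ)
    (F F' : ℝ → Matrix (Fin r) (Fin p) ℂ) (G G' : ℝ → Matrix (Fin p) (Fin r) ℂ)
    (hFder : ∀ x ∈ Icc (0:ℝ) T, HasDerivWithinAt F (F' x) (Icc 0 T) x)
    (hGder : ∀ x ∈ Icc (0:ℝ) T, HasDerivWithinAt G (G' x) (Icc 0 T) x)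
    (hFcont : ContinuousOn F' (Icc 0 T)) (hGcont : ContinuousOn G' (Icc 0 T))
    (hFG : ∀ x ∈ Icc (0:ℝ) T, F x * G x = 1)
    (ρ : ℝ → Matrix (Fin r) (Fin r) ℂ)
    (hρ : ∀ x ∈ Icc (0:ℝ) T,
      HasDerivWithinAt ρ (F' x * G x * ρ x) (Icc 0 T) x)
    (hρ0 : ρ 0 = 1) (hρinv : ∀ x ∈ Icc (0:ℝ) T, IsUnit (ρ x))
    (u₁ tu : ℝ → Matrix (Fin p) (Fin p) ℂ)
    (hu₁ : ∀ x ∈ Icc (0:ℝ) T,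
      HasDerivWithinAt u₁ (lam • (G x * F x * u₁ x)) (Icc 0 T) x)
    (hu₁0 : u₁ 0 = 1)
    (htu : ∀ x ∈ Icc (0:ℝ) T,
      HasDerivWithinAt tu (-(G x * F' x * tu x)) (Icc 0 T) x)
    (htu0 : tu 0 = 1) (htuinv : ∀ x ∈ Icc (0:ℝ) T, IsUnit (tu x))
    (g : ℝ → Matrix (Fin r) (Fin r) ℂ)
    (hg : ∀ x : ℝ, g x = (ρ x)⁻¹ * (F x * u₁ x * G 0))
    (α : ℝ → Matrix (Fin r) (Fin p) ℂ)
    (hα : ∀ x : ℝ, α x = (ρ x)⁻¹ * (F' x * tu x))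
    (β : ℝ → Matrix (Fin p) (Fin r) ℂ)
    (hβ : ∀ t : ℝ, β t = -((tu t)⁻¹ * ((G t * F' t * G t + G' t) * ρ t))) :
    g 0 = 1 ∧ ∀ x ∈ Icc (0:ℝ) T,
      HasDerivWithinAt g
        (α x * (∫ t in (0:ℝ)..x, β t * g t) + lam • g x) (Icc 0 T) x :=
  stmt_15_general hT lam F F' G G' hFder hGder hFcont hGcont hFG ρ hρ hρ0 hρinv u₁ tu hu₁ hu₁0 htu
    htu0 htuinv g hg α hα β hβ
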